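/- Let H ∈ (1/2,1), T > 0, and let ψ ∈ L²([0,T],ℝ). Then H(2H-1) ∫₀^T ∫₀^T |ψ(s)||ψ(t)| |s-t|^{2H-2} ds dt ≤ 2H T^{2H-1} ∫₀^T |ψ(s)|² ds. -/

import Mathlib

open MeasureTheory Set Function intervalIntegral
open scoped ENNReal NNReal

/-!
By AM–GM, `|ψ s| |ψ t| ≤ (ψ s ^ 2 + ψ t ^ 2) / 2`, and since the kernel `|s - t| ^ (2H - 2)` is
symmetric, both halves give the same contribution, so the double integral is at most
`∫ ψ s ^ 2 (∫ |s - t| ^ (2H - 2) dt) ds`. The inner integral equals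
`(s ^ (2H - 1) + (T - s) ^ (2H - 1)) / (2H - 1) ≤ 2 T ^ (2H - 1) / (2H - 1)`, and the factor
`H (2H - 1)` turns this constant into `2H T ^ (2H - 1)`.
-/

theorem ENNReal.two_mul_le_add_sq (a b : ℝ≥0∞) : 2 * a * b ≤ a ^ 2 + b ^ 2 := by
  rcases eq_or_ne a ⊤ with rfl | ha
  · simp
  rcases eq_or_ne b ⊤ with rfl | hb
  · simp
  lift a to ℝ≥0 using ha
  lift b to ℝ≥0 using hb
  exact_mod_cast _root_.two_mul_le_add_sq a b

theorem lintegral_lintegral_mul_mul_le_of_symm {α : Type*} [MeasurableSpace α] {μ : Measure α}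
    [SFinite μ] {f : α → ℝ≥0∞} {K : α → α → ℝ≥0∞} {C : ℝ≥0∞} (hf : Measurable f)
    (hK : Measurable (uncurry K)) (hK_symm : ∀ x y, K x y = K y x)
    (hC : ∀ᵐ x ∂μ, ∫⁻ y, K x y ∂μ ≤ C) :
    ∫⁻ x, ∫⁻ y, f y * f x * K y x ∂μ ∂μ ≤ C * ∫⁻ x, f x ^ 2 ∂μ := by
  have diagonal : ∫⁻ x, ∫⁻ y, f x ^ 2 * K x y ∂μ ∂μ ≤ C * ∫⁻ x, f x ^ 2 ∂μ :=
    calc ∫⁻ x, ∫⁻ y, f x ^ 2 * K x y ∂μ ∂μ = ∫⁻ x, f x ^ 2 * ∫⁻ y, K x y ∂μ ∂μ := by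
          refine lintegral_congr fun x => ?_
          exact lintegral_const_mul _ (hK.comp measurable_prodMk_left)
      _ ≤ ∫⁻ x, f x ^ 2 * C ∂μ := lintegral_mono_ae (hC.mono fun x hx => by gcongr)
      _ = C * ∫⁻ x, f x ^ 2 ∂μ := by rw [lintegral_mul_const _ (hf.pow_const 2), mul_comm]
  have swap : ∫⁻ x, ∫⁻ y, f y ^ 2 * K y x ∂μ ∂μ = ∫⁻ x, ∫⁻ y, f x ^ 2 * K x y ∂μ ∂μ :=
    lintegral_lintegral_swap (by fun_prop)
  rw [← ENNReal.mul_le_mul_iff_right (a := 2) two_ne_zero ENNReal.ofNat_ne_top]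
  calc 2 * ∫⁻ x, ∫⁻ y, f y * f x * K y x ∂μ ∂μ
      = ∫⁻ x, ∫⁻ y, 2 * f y * f x * K y x ∂μ ∂μ := by
        rw [← lintegral_const_mul' _ _ ENNReal.ofNat_ne_top]
        refine lintegral_congr fun x => ?_
        rw [← lintegral_const_mul' _ _ ENNReal.ofNat_ne_top]
        simp only [mul_assoc]
    _ ≤ ∫⁻ x, ∫⁻ y, (f y ^ 2 * K y x + f x ^ 2 * K x y) ∂μ ∂μ := by
        gcongr with x y
        rw [hK_symm x y, ← add_mul]
        gcongr
        exact ENNReal.two_mul_le_add_sq _ _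
    _ = ∫⁻ x, ∫⁻ y, f y ^ 2 * K y x ∂μ ∂μ + ∫⁻ x, ∫⁻ y, f x ^ 2 * K x y ∂μ ∂μ := by
        rw [← lintegral_add_left (by fun_prop)]
        refine lintegral_congr fun x => ?_
        exact lintegral_add_left (by fun_prop) _
    _ ≤ 2 * (C * ∫⁻ x, f x ^ 2 ∂μ) := by
        rw [swap, two_mul]
        gcongr

section AbsSubRpow

variable {r : ℝ}

theorem intervalIntegrable_abs_rpow (hr : -1 < r) (a b : ℝ) :
    IntervalIntegrable (fun x => |x| ^ r) volume a b := by
  have from_zero : ∀ c, 0 ≤ c → IntervalIntegrable (fun x => |x| ^ r) volume 0 c := fun c hc =>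
    (intervalIntegrable_rpow' hr).congr_uIoo fun x hx => by
      rw [uIoo_of_le hc] at hx
      simp only [abs_of_pos hx.1]
  suffices ∀ c, IntervalIntegrable (fun x => |x| ^ r) volume 0 c from (this a).symm.trans (this b)
  intro c
  rcases le_total 0 c with hc | hc
  · exact from_zero c hc
  · simpa [abs_neg] using (from_zero (-c) (by linarith)).comp_sub_left 0

theorem intervalIntegrable_abs_sub_rpow (hr : -1 < r) (u a b : ℝ) :
    IntervalIntegrable (fun v => |u - v| ^ r) volume a b := by
  simpa using (intervalIntegrable_abs_rpow hr (u - a) (u - b)).comp_sub_left u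

theorem integral_abs_rpow_of_nonneg (hr : -1 < r) {a : ℝ} (ha : 0 ≤ a) :
    ∫ x in 0..a, |x| ^ r = a ^ (r + 1) / (r + 1) := by
  rw [integral_congr_uIoo (g := fun x => x ^ r) fun x hx => ?_, integral_rpow (Or.inl hr),
    Real.zero_rpow (by linarith), sub_zero]
  rw [uIoo_of_le ha] at hx
  simp only [abs_of_pos hx.1]

theorem integral_abs_sub_rpow (hr : -1 < r) {u T : ℝ} (hu : u ∈ Icc 0 T) :
    ∫ v in 0..T, |u - v| ^ r = (u ^ (r + 1) + (T - u) ^ (r + 1)) / (r + 1) := by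
  have reflect : ∫ x in (u - T)..0, |x| ^ r = ∫ x in 0..(T - u), |x| ^ r := by
    simpa [abs_neg] using (integral_comp_neg (fun x => |x| ^ r) (a := 0) (b := T - u)).symm
  rw [integral_comp_sub_left (fun x => |x| ^ r), sub_zero,
    ← integral_add_adjacent_intervals (intervalIntegrable_abs_rpow hr _ 0)
      (intervalIntegrable_abs_rpow hr 0 u), reflect,
    integral_abs_rpow_of_nonneg hr (sub_nonneg.2 hu.2), integral_abs_rpow_of_nonneg hr hu.1,
    add_div, add_comm]

theorem lintegral_abs_sub_rpow_le (hr : -1 < r) {u T : ℝ} (hu : u ∈ Icc 0 T) :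
    ∫⁻ v in Ioc 0 T, ‖|u - v| ^ r‖ₑ ≤ ENNReal.ofReal (2 * T ^ (r + 1) / (r + 1)) := by
  have hT : 0 ≤ T := hu.1.trans hu.2
  have hr' : 0 < r + 1 := by linarith
  have hint : IntegrableOn (fun v => |u - v| ^ r) (Ioc 0 T) :=
    (intervalIntegrable_iff_integrableOn_Ioc_of_le hT).1 (intervalIntegrable_abs_sub_rpow hr u 0 T)
  rw [← ofReal_integral_norm_eq_lintegral_enorm hint]
  gcongr
  simp_rw [Real.norm_of_nonneg (Real.rpow_nonneg (abs_nonneg _) _)]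
  rw [← integral_of_le hT, integral_abs_sub_rpow hr hu, two_mul]
  gcongr <;> linarith [hu.1, hu.2]

theorem integral_integral_abs_mul_abs_mul_abs_sub_rpow_le (hr : -1 < r) {T : ℝ} (hT : 0 ≤ T)
    {ψ : ℝ → ℝ} (hψ : Measurable ψ) (hψ2 : IntegrableOn (fun s => ψ s ^ 2) (Ioc 0 T)) :
    ∫ t in Ioc 0 T, ∫ s in Ioc 0 T, |ψ s| * |ψ t| * |s - t| ^ r ≤
      2 * T ^ (r + 1) / (r + 1) * ∫ s in Ioc 0 T, ψ s ^ 2 := by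
  have hC : 0 ≤ 2 * T ^ (r + 1) / (r + 1) :=
    div_nonneg (mul_nonneg zero_le_two (Real.rpow_nonneg hT _)) (by linarith)
  have kernel_bound : ∀ᵐ t ∂volume.restrict (Ioc 0 T),
      ∫⁻ s in Ioc 0 T, ‖|t - s| ^ r‖ₑ ≤ ENNReal.ofReal (2 * T ^ (r + 1) / (r + 1)) := by
    filter_upwards [ae_restrict_mem measurableSet_Ioc] with t ht
    exact lintegral_abs_sub_rpow_le hr (Ioc_subset_Icc_self ht)
  have lintegral_sq : ∫⁻ s in Ioc 0 T, ‖ψ s‖ₑ ^ 2 = ENNReal.ofReal (∫ s in Ioc 0 T, ψ s ^ 2) := by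
    rw [ofReal_integral_eq_lintegral_ofReal hψ2 (ae_of_all _ fun s => sq_nonneg _)]
    refine lintegral_congr fun s => ?_
    rw [Real.enorm_eq_ofReal_abs, ← ENNReal.ofReal_pow (abs_nonneg _), sq_abs]
  have key : ‖∫ t in Ioc 0 T, ∫ s in Ioc 0 T, |ψ s| * |ψ t| * |s - t| ^ r‖ₑ ≤
      ENNReal.ofReal (2 * T ^ (r + 1) / (r + 1) * ∫ s in Ioc 0 T, ψ s ^ 2) :=
    calc _ ≤ ∫⁻ t in Ioc 0 T, ∫⁻ s in Ioc 0 T, ‖|ψ s| * |ψ t| * |s - t| ^ r‖ₑ :=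
          (enorm_integral_le_lintegral_enorm _).trans
            (lintegral_mono fun t => enorm_integral_le_lintegral_enorm _)
      _ = ∫⁻ t in Ioc 0 T, ∫⁻ s in Ioc 0 T, ‖ψ s‖ₑ * ‖ψ t‖ₑ * ‖|s - t| ^ r‖ₑ := by
          simp only [enorm_mul, Real.enorm_abs]
      _ ≤ _ := lintegral_lintegral_mul_mul_le_of_symm hψ.enorm (by fun_prop)
          (fun s t => by rw [abs_sub_comm]) kernel_bound
      _ = _ := by rw [lintegral_sq, ENNReal.ofReal_mul hC]
  calc _ ≤ |∫ t in Ioc 0 T, ∫ s in Ioc 0 T, |ψ s| * |ψ t| * |s - t| ^ r| := le_abs_self _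
    _ ≤ _ := by
      rw [← ENNReal.ofReal_le_ofReal_iff (by positivity), ← Real.enorm_eq_ofReal_abs]
      exact key

end AbsSubRpow

/-- For `H ∈ (1/2,1)`, `T > 0` and `ψ ∈ L²([0,T])`:
`H(2H-1) ∫₀^T ∫₀^T |ψ(s)||ψ(t)||s-t|^{2H-2} ds dt ≤ 2H T^{2H-1} ∫₀^T |ψ(s)|² ds`. -/
theorem l2_embeds_in_absH (H T : ℝ) (hH : H ∈ Set.Ioo (1/2 : ℝ) 1) (hT : 0 < T)
    (ψ : ℝ → ℝ) (hmeas : Measurable ψ)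
    (hL2 : IntegrableOn (fun s => (ψ s)^2) (Set.Icc 0 T)) :
    H * (2*H - 1) *
        ∫ t in (0:ℝ)..T, ∫ s in (0:ℝ)..T, |ψ s| * |ψ t| * |s - t| ^ (2*H - 2) ≤
      2 * H * T ^ (2*H - 1) * ∫ s in (0:ℝ)..T, (ψ s)^2 := by
  have hH₁ : 1 / 2 < H := hH.1
  have bound := integral_integral_abs_mul_abs_mul_abs_sub_rpow_le (r := 2 * H - 2) (by linarith)
    hT.le hmeas (hL2.mono_set Ioc_subset_Icc_self)
  rw [show 2 * H - 2 + 1 = 2 * H - 1 by ring] at bound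
  simp only [integral_of_le hT.le]
  calc _ ≤ H * (2 * H - 1) * (2 * T ^ (2 * H - 1) / (2 * H - 1) * ∫ s in Ioc 0 T, ψ s ^ 2) := by
        gcongr
        nlinarith
    _ = _ := by
        have : 2 * H - 1 ≠ 0 := by linarith
        grind
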